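/- arXiv:2501.12711 — 7 statements merged into one kernel-verified Lean document; each statement's English description precedes it below -/
import Mathlib

section
/- Let I be a set and let {f_i : D → D_i}_{i∈I} be a family of coproduct-preserving tt-functors between tt-categories with small coproducts such that each f_i admits a coproduct-preserving triangulated right adjoint g_i and each adjunction f_i ⊣ g_i satisfies the projection formula. Assume that the monoidal unit 1_D belongs to Loc^⊗(∐_{i∈I} g_i(1_{D_i})). Then for every object x of D one has Loc^⊗(x) = Loc^⊗(∐_{i∈I} g_i(f_i(x))); equivalently, x ∈ Loc^⊗(∐_{i∈I} g_i(f_i(x))) and ∐_{i∈I} g_i(f_i(x)) ∈ Loc^⊗(x). -/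
open CategoryTheory Limits Pretriangulated MonoidalCategory

universe w v u v' u' v'' u''

section LocDefs

variable {C : Type u} [Category.{v} C] [HasZeroObject C] [HasShift C ℤ] [Preadditive C]
  [∀ n : ℤ, (shiftFunctor C n).Additive] [Pretriangulated C]

/-- A class of objects of a pretriangulated category is *localizing* if it is closed under
isomorphisms, shifts in both directions, extensions (if two terms of a distinguished triangle
lie in the class, so does the third) and all existing small coproducts. -/
structure IsLocalizing (P : Set C) : Prop where
  of_iso : ∀ {x y : C}, (x ≅ y) → x ∈ P → y ∈ P
  shift : ∀ (n : ℤ) {x : C}, x ∈ P → (shiftFunctor C n).obj x ∈ P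
  ext₃ : ∀ T ∈ distTriang C, Triangle.obj₁ T ∈ P → Triangle.obj₂ T ∈ P → Triangle.obj₃ T ∈ P
  ext₂ : ∀ T ∈ distTriang C, Triangle.obj₁ T ∈ P → Triangle.obj₃ T ∈ P → Triangle.obj₂ T ∈ P
  ext₁ : ∀ T ∈ distTriang C, Triangle.obj₂ T ∈ P → Triangle.obj₃ T ∈ P → Triangle.obj₁ T ∈ P
  coprod : ∀ {J : Type w} (f : J → C) [HasCoproduct f], (∀ j, f j ∈ P) → (∐ f) ∈ P

/-- A localizing class of objects is a *localizing tensor-ideal class* if it is moreover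
closed under tensoring with arbitrary objects. -/
structure IsLocalizingTensorIdeal [MonoidalCategory C] (P : Set C) extends
    IsLocalizing.{w} P : Prop where
  tensor : ∀ (a : C) {x : C}, x ∈ P → (a ⊗ x) ∈ P

/-- `x` belongs to the localizing subcategory `Loc(S)` generated by `S`: every localizing
class containing `S` contains `x`. -/
def LocMem (S : Set C) (x : C) : Prop :=
  ∀ P : Set C, IsLocalizing.{w} P → S ⊆ P → x ∈ P

/-- `x` belongs to the localizing tensor-ideal `Loc^⊗(S)` generated by `S`: every localizing
tensor-ideal class containing `S` contains `x`. -/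
def LocTensorMem [MonoidalCategory C] (S : Set C) (x : C) : Prop :=
  ∀ P : Set C, IsLocalizingTensorIdeal.{w} P → S ⊆ P → x ∈ P

end LocDefs

/-
The projection formula gives `gᵢ(fᵢ x) ≅ gᵢ(fᵢ x ⊗ 𝟙) ≅ x ⊗ gᵢ 𝟙`, and since `x ⊗ -` preserves
coproducts, `∐ᵢ gᵢ(fᵢ x) ≅ x ⊗ G` with `G = ∐ᵢ gᵢ 𝟙`. This lies in the tensor ideal generated
by `x`. Conversely, for a localizing tensor ideal `P` containing `x ⊗ G`, the class
`{y | x ⊗ y ∈ P}` is again a localizing tensor ideal; it contains `G`, hence `𝟙`, so `x ∈ P`.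
-/

namespace IsLocalizing

variable {C : Type u} [Category.{v} C] [HasZeroObject C] [HasShift C ℤ] [Preadditive C]
  [∀ n : ℤ, (shiftFunctor C n).Additive] [Pretriangulated C]
  {C' : Type u'} [Category.{v'} C'] [HasZeroObject C'] [HasShift C' ℤ] [Preadditive C']
  [∀ n : ℤ, (shiftFunctor C' n).Additive] [Pretriangulated C'] [HasCoproducts.{w} C']

theorem preimage (F : C ⥤ C') [F.CommShift ℤ] [F.IsTriangulated]
    [∀ J : Type w, PreservesColimitsOfShape (Discrete J) F] {P : Set C'}
    (hP : IsLocalizing.{w} P) : IsLocalizing.{w} (F.obj ⁻¹' P) where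
  of_iso e hx := hP.of_iso (F.mapIso e) hx
  shift n _ hx := hP.of_iso ((F.commShiftIso n).symm.app _) (hP.shift n hx)
  ext₃ T hT := hP.ext₃ _ (F.map_distinguished T hT)
  ext₂ T hT := hP.ext₂ _ (F.map_distinguished T hT)
  ext₁ T hT := hP.ext₁ _ (F.map_distinguished T hT)
  coprod φ _ hφ := hP.of_iso (PreservesCoproduct.iso F φ).symm (hP.coprod _ hφ)

end IsLocalizing

namespace IsLocalizingTensorIdeal

variable {C : Type u} [Category.{v} C] [HasZeroObject C] [HasShift C ℤ] [Preadditive C]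
  [∀ n : ℤ, (shiftFunctor C n).Additive] [Pretriangulated C]
  [MonoidalCategory C] [BraidedCategory C] {P : Set C}

theorem tensor_right (hP : IsLocalizingTensorIdeal.{w} P) {x : C} (a : C) (hx : x ∈ P) :
    x ⊗ a ∈ P :=
  hP.of_iso (β_ a x) (hP.tensor a hx)

theorem preimage_tensorLeft [HasCoproducts.{w} C] [∀ a : C, (tensorLeft a).CommShift ℤ]
    [∀ a : C, (tensorLeft a).IsTriangulated]
    [∀ (a : C) (J : Type w), PreservesColimitsOfShape (Discrete J) (tensorLeft a)]
    (hP : IsLocalizingTensorIdeal.{w} P) (x : C) :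
    IsLocalizingTensorIdeal.{w} {y | x ⊗ y ∈ P} where
  toIsLocalizing := hP.preimage (tensorLeft x)
  tensor a y hy :=
    hP.of_iso ((α_ a x y).symm ≪≫ whiskerRightIso (β_ a x) y ≪≫ α_ x a y) (hP.tensor a hy)

end IsLocalizingTensorIdeal

namespace LocTensorMem

variable {C : Type u} [Category.{v} C] [HasZeroObject C] [HasShift C ℤ] [Preadditive C]
  [∀ n : ℤ, (shiftFunctor C n).Additive] [Pretriangulated C] [MonoidalCategory C]
  {S T : Set C}

theorem of_mem {x : C} (hx : x ∈ S) : LocTensorMem.{w} S x :=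
  fun _ _ hS => hS hx

theorem of_iso {x y : C} (e : x ≅ y) (hx : LocTensorMem.{w} S x) : LocTensorMem.{w} S y :=
  fun P hP hS => hP.of_iso e (hx P hP hS)

theorem tensor_right [BraidedCategory C] {x : C} (a : C) (hx : LocTensorMem.{w} S x) :
    LocTensorMem.{w} S (x ⊗ a) :=
  fun P hP hS => hP.tensor_right a (hx P hP hS)

theorem tensor_left_of_forall_mem [BraidedCategory C] [HasCoproducts.{w} C]
    [∀ a : C, (tensorLeft a).CommShift ℤ] [∀ a : C, (tensorLeft a).IsTriangulated]
    [∀ (a : C) (J : Type w), PreservesColimitsOfShape (Discrete J) (tensorLeft a)]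
    {a : C} (ha : LocTensorMem.{w} S a) (x : C) (hS : ∀ s ∈ S, LocTensorMem.{w} T (x ⊗ s)) :
    LocTensorMem.{w} T (x ⊗ a) :=
  fun P hP hT => ha _ (hP.preimage_tensorLeft x) fun s hs => hS s hs P hP hT

end LocTensorMem

theorem nonempty_sigma_iso_tensor_sigma_of_projection_formula {I : Type w}
    {D : Type u} [Category.{v} D] [MonoidalCategory D] [HasCoproducts.{w} D]
    [∀ (a : D) (J : Type w), PreservesColimitsOfShape (Discrete J) (tensorLeft a)]
    {Di : I → Type u'} [∀ i, Category.{v'} (Di i)] [∀ i, MonoidalCategory (Di i)]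
    (f : ∀ i, D ⥤ Di i) (g : ∀ i, Di i ⥤ D)
    (proj : ∀ (i : I) (x : D) (y : Di i),
      Nonempty ((g i).obj ((f i).obj x ⊗ y) ≅ x ⊗ (g i).obj y)) (x : D) :
    Nonempty ((∐ fun i => (g i).obj ((f i).obj x)) ≅ x ⊗ ∐ fun i => (g i).obj (𝟙_ (Di i))) :=
  ⟨Sigma.mapIso (fun i => (g i).mapIso (ρ_ ((f i).obj x)).symm ≪≫ (proj i x (𝟙_ (Di i))).some) ≪≫
    (PreservesCoproduct.iso (tensorLeft x) _).symm⟩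

/-- Let `{f i : D ⥤ Di i}` be a family of coproduct-preserving tt-functors between
tt-categories with small coproducts, such that each `f i` admits a coproduct-preserving
triangulated right adjoint `g i` satisfying the projection formula. If the monoidal unit
`𝟙_ D` lies in `Loc^⊗(∐ᵢ (g i).obj (𝟙_ (Di i)))`, then for every object `x` of `D` one has
`Loc^⊗(x) = Loc^⊗(∐ᵢ (g i).obj ((f i).obj x))`, i.e. each generator belongs to the
localizing tensor-ideal generated by the other. -/
theorem locTensor_eq_locTensor_coprod_of_unit_mem
    {I : Type w}
    -- `D` is a tt-category with small coproducts
    {D : Type u} [Category.{v} D] [HasZeroObject D] [HasShift D ℤ] [Preadditive D]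
    [∀ n : ℤ, (shiftFunctor D n).Additive] [Pretriangulated D]
    [MonoidalCategory D] [SymmetricCategory D] [HasCoproducts.{w} D]
    [∀ a : D, (tensorLeft a).CommShift ℤ] [∀ a : D, (tensorLeft a).IsTriangulated]
    [∀ (a : D) (J : Type w), PreservesColimitsOfShape (Discrete J) (tensorLeft a)]
    -- each `Di i` is a tt-category with small coproducts
    {Di : I → Type u'} [∀ i, Category.{v'} (Di i)] [∀ i, HasZeroObject (Di i)]
    [∀ i, HasShift (Di i) ℤ] [∀ i, Preadditive (Di i)]
    [∀ (i : I) (n : ℤ), (shiftFunctor (Di i) n).Additive] [∀ i, Pretriangulated (Di i)]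
    [∀ i, MonoidalCategory (Di i)] [∀ i, SymmetricCategory (Di i)]
    [∀ i, HasCoproducts.{w} (Di i)]
    [∀ (i : I) (a : Di i), (tensorLeft a).CommShift ℤ]
    [∀ (i : I) (a : Di i), (tensorLeft a).IsTriangulated]
    [∀ (i : I) (a : Di i) (J : Type w), PreservesColimitsOfShape (Discrete J) (tensorLeft a)]
    -- the `f i` are coproduct-preserving tt-functors
    (f : ∀ i, D ⥤ Di i)
    [∀ i, (f i).Additive] [∀ i, (f i).CommShift ℤ] [∀ i, (f i).IsTriangulated]
    [∀ i, (f i).Monoidal]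
    [∀ (i : I) (J : Type w), PreservesColimitsOfShape (Discrete J) (f i)]
    -- the `g i` are coproduct-preserving triangulated right adjoints of the `f i`
    (g : ∀ i, Di i ⥤ D)
    [∀ i, (g i).Additive] [∀ i, (g i).CommShift ℤ] [∀ i, (g i).IsTriangulated]
    [∀ (i : I) (J : Type w), PreservesColimitsOfShape (Discrete J) (g i)]
    (adj : ∀ i, f i ⊣ g i)
    -- the projection formula holds for each adjunction `f i ⊣ g i`
    (proj : ∀ (i : I) (x : D) (y : Di i),
      Nonempty ((g i).obj ((f i).obj x ⊗ y) ≅ x ⊗ (g i).obj y))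
    -- the unit is built from the `(g i).obj (𝟙_ (Di i))`
    (hunit : LocTensorMem.{w} {∐ fun i => (g i).obj (𝟙_ (Di i))} (𝟙_ D))
    (x : D) :
    LocTensorMem.{w} {x} (∐ fun i => (g i).obj ((f i).obj x)) ∧
      LocTensorMem.{w} {∐ fun i => (g i).obj ((f i).obj x)} x := by
  obtain ⟨e⟩ := nonempty_sigma_iso_tensor_sigma_of_projection_formula f g proj x
  refine ⟨((LocTensorMem.of_mem (Set.mem_singleton x)).tensor_right _).of_iso e.symm, ?_⟩
  have hx : LocTensorMem.{w} {∐ fun i => (g i).obj ((f i).obj x)} (x ⊗ 𝟙_ D) :=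
    hunit.tensor_left_of_forall_mem x fun _ hs => hs ▸ (LocTensorMem.of_mem (Set.mem_singleton _)).of_iso e
  exact hx.of_iso (ρ_ x)
end

section
/- (Detection) Let I be a set and let {f_i : D → D_i}_{i∈I} be a family of coproduct-preserving tt-functors between tt-categories with small coproducts such that each f_i admits a coproduct-preserving triangulated right adjoint g_i and each adjunction f_i ⊣ g_i satisfies the projection formula. Assume that the monoidal unit 1_D belongs to Loc^⊗(∐_{i∈I} g_i(1_{D_i})). If x is an object of D with f_i(x) ≅ 0 for every i ∈ I, then x ≅ 0. -/
/-!
If every `f i` kills `x`, the projection formula gives `x ⊗ g i (𝟙) ≅ g i (f i x ⊗ 𝟙) ≅ 0`, hence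
`x ⊗ ∐ᵢ g i (𝟙) ≅ 0`. The objects `y` with `x ⊗ y ≅ 0` form a localizing tensor-ideal, because
`x ⊗ -` is triangulated and preserves coproducts; so it contains `Loc^⊗(∐ᵢ g i (𝟙))`, in particular
the unit, and `x ≅ x ⊗ 𝟙 ≅ 0`.
-/

open CategoryTheory Limits Pretriangulated MonoidalCategory

universe w v u v' u' v'' u''

section TensorAnnihilator

variable {C : Type u} [Category.{v} C] [HasZeroObject C] [HasShift C ℤ] [Preadditive C]
  [∀ n : ℤ, (shiftFunctor C n).Additive] [Pretriangulated C]
  [MonoidalCategory C] [BraidedCategory C]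
  [∀ a : C, (tensorLeft a).CommShift ℤ] [∀ a : C, (tensorLeft a).IsTriangulated]

def tensorAnnihilator (x : C) : Set C := {y | IsZero (x ⊗ y)}

variable [∀ (a : C) (J : Type w), PreservesColimitsOfShape (Discrete J) (tensorLeft a)]

lemma isLocalizingTensorIdeal_tensorAnnihilator (x : C) :
    IsLocalizingTensorIdeal.{w} (tensorAnnihilator x) where
  of_iso e hy := hy.of_iso ((tensorLeft x).mapIso e).symm
  shift n _ hy :=
    ((shiftFunctor C n).map_isZero hy).of_iso (((tensorLeft x).commShiftIso n).app _)
  ext₃ T hT := Triangle.isZero₃_of_isZero₁₂ _ ((tensorLeft x).map_distinguished T hT)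
  ext₂ T hT := Triangle.isZero₂_of_isZero₁₃ _ ((tensorLeft x).map_distinguished T hT)
  ext₁ T hT := Triangle.isZero₁_of_isZero₂₃ _ ((tensorLeft x).map_distinguished T hT)
  coprod c _ hc :=
    (isColimitOfPreserves (tensorLeft x) (colimit.isColimit (Discrete.functor c))).isZero_pt
      (Functor.isZero _ fun j => hc j.as)
  tensor a y hy :=
    ((tensorLeft a).map_isZero hy).of_iso
      ((α_ x a y).symm ≪≫ whiskerRightIso (β_ x a) y ≪≫ α_ a x y)

lemma isZero_of_subset_tensorAnnihilator {S : Set C} (hunit : LocTensorMem.{w} S (𝟙_ C))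
    {x : C} (hS : S ⊆ tensorAnnihilator x) : IsZero x :=
  (hunit _ (isLocalizingTensorIdeal_tensorAnnihilator x) hS).of_iso (ρ_ x).symm

end TensorAnnihilator

lemma isZero_tensor_obj_unit_of_isZero_map {C : Type*} [Category C] [MonoidalCategory C]
    [HasZeroMorphisms C] {C' : Type*} [Category C'] [MonoidalCategory C'] [HasZeroMorphisms C']
    (F : C ⥤ C') (G : C' ⥤ C) [G.PreservesZeroMorphisms] {x : C}
    (proj : Nonempty (G.obj (F.obj x ⊗ 𝟙_ C') ≅ x ⊗ G.obj (𝟙_ C'))) (hx : IsZero (F.obj x)) :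
    IsZero (x ⊗ G.obj (𝟙_ C')) :=
  (G.map_isZero (hx.of_iso (ρ_ (F.obj x)))).of_iso proj.some.symm

/-- Let `{f i : D ⥤ Di i}` be a family of coproduct-preserving tt-functors between
tt-categories with small coproducts, such that each `f i` admits a coproduct-preserving
triangulated right adjoint `g i` satisfying the projection formula. If the monoidal unit
`𝟙_ D` lies in `Loc^⊗(∐ᵢ (g i).obj (𝟙_ (Di i)))`, then for every object `x` of `D` one has
(Detection) if `(f i).obj x ≅ 0` for all `i`, then `x ≅ 0`. -/
theorem detection_of_unit_mem
    {I : Type w}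
    -- `D` is a tt-category with small coproducts
    {D : Type u} [Category.{v} D] [HasZeroObject D] [HasShift D ℤ] [Preadditive D]
    [∀ n : ℤ, (shiftFunctor D n).Additive] [Pretriangulated D]
    [MonoidalCategory D] [SymmetricCategory D] [HasCoproducts.{w} D]
    [∀ a : D, (tensorLeft a).CommShift ℤ] [∀ a : D, (tensorLeft a).IsTriangulated]
    [∀ (a : D) (J : Type w), PreservesColimitsOfShape (Discrete J) (tensorLeft a)]
    -- each `Di i` is a tt-category with small coproducts
    {Di : I → Type u'} [∀ i, Category.{v'} (Di i)] [∀ i, HasZeroObject (Di i)]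
    [∀ i, HasShift (Di i) ℤ] [∀ i, Preadditive (Di i)]
    [∀ (i : I) (n : ℤ), (shiftFunctor (Di i) n).Additive] [∀ i, Pretriangulated (Di i)]
    [∀ i, MonoidalCategory (Di i)] [∀ i, SymmetricCategory (Di i)]
    [∀ i, HasCoproducts.{w} (Di i)]
    [∀ (i : I) (a : Di i), (tensorLeft a).CommShift ℤ]
    [∀ (i : I) (a : Di i), (tensorLeft a).IsTriangulated]
    [∀ (i : I) (a : Di i) (J : Type w), PreservesColimitsOfShape (Discrete J) (tensorLeft a)]
    -- the `f i` are coproduct-preserving tt-functors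
    (f : ∀ i, D ⥤ Di i)
    [∀ i, (f i).Additive] [∀ i, (f i).CommShift ℤ] [∀ i, (f i).IsTriangulated]
    [∀ i, (f i).Monoidal]
    [∀ (i : I) (J : Type w), PreservesColimitsOfShape (Discrete J) (f i)]
    -- the `g i` are coproduct-preserving triangulated right adjoints of the `f i`
    (g : ∀ i, Di i ⥤ D)
    [∀ i, (g i).Additive] [∀ i, (g i).CommShift ℤ] [∀ i, (g i).IsTriangulated]
    [∀ (i : I) (J : Type w), PreservesColimitsOfShape (Discrete J) (g i)]
    (adj : ∀ i, f i ⊣ g i)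
    -- the projection formula holds for each adjunction `f i ⊣ g i`
    (proj : ∀ (i : I) (x : D) (y : Di i),
      Nonempty ((g i).obj ((f i).obj x ⊗ y) ≅ x ⊗ (g i).obj y))
    -- the unit is built from the `(g i).obj (𝟙_ (Di i))`
    (hunit : LocTensorMem.{w} {∐ fun i => (g i).obj (𝟙_ (Di i))} (𝟙_ D))
    (x : D) (hx : ∀ i, IsZero ((f i).obj x)) :
    IsZero x := by
  refine isZero_of_subset_tensorAnnihilator hunit ?_
  rintro _ rfl
  exact (isLocalizingTensorIdeal_tensorAnnihilator x).coprod _ fun i =>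
    isZero_tensor_obj_unit_of_isZero_map (f i) (g i) (proj i x _) (hx i)
end

section
/- (Building) Let I be a set and let {f_i : D → D_i}_{i∈I} be a family of coproduct-preserving tt-functors between tt-categories with small coproducts such that each f_i admits a coproduct-preserving triangulated right adjoint g_i and each adjunction f_i ⊣ g_i satisfies the projection formula. Assume that the monoidal unit 1_D belongs to Loc^⊗(∐_{i∈I} g_i(1_{D_i})). Then for any objects x and y of D, one has x ∈ Loc^⊗(y) if and only if f_i(x) ∈ Loc^⊗(f_i(y)) for all i ∈ I. -/
open CategoryTheory Limits Pretriangulated MonoidalCategory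

universe w v u v' u' v'' u''

/-!
`Loc^⊗(y)` is pulled back along each tt-functor `fᵢ`, which gives the forward direction.
Conversely, let `P = Loc^⊗(y)`. The objects `w` of `Dᵢ` with `gᵢ(a ⊗ w) ∈ P` for all `a` form a
localizing tensor-ideal, and by the projection formula `gᵢ(a ⊗ fᵢ y) ≅ y ⊗ gᵢ a` it contains
`fᵢ y`, hence `fᵢ x`; taking `a = 𝟙` gives `x ⊗ gᵢ 𝟙 ≅ gᵢ(fᵢ x) ∈ P`. Since `z ↦ x ⊗ z` pulls `P`
back to a localizing tensor-ideal containing `∐ᵢ gᵢ 𝟙`, it contains `𝟙`, so `x ≅ x ⊗ 𝟙 ∈ P`.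
-/

section Localizing

variable {C : Type u} [Category.{v} C] [HasZeroObject C] [HasShift C ℤ] [Preadditive C]
  [∀ n : ℤ, (shiftFunctor C n).Additive] [Pretriangulated C]
  {C' : Type u'} [Category.{v'} C'] [HasZeroObject C'] [HasShift C' ℤ] [Preadditive C']
  [∀ n : ℤ, (shiftFunctor C' n).Additive] [Pretriangulated C']

theorem IsLocalizing.iInter {ι : Sort*} {P : ι → Set C} (hP : ∀ i, IsLocalizing.{w} (P i)) :
    IsLocalizing.{w} (⋂ i, P i) := by
  refine ⟨?_, ?_, ?_, ?_, ?_, ?_⟩ <;> simp only [Set.mem_iInter]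
  · exact fun e hx i => (hP i).of_iso e (hx i)
  · exact fun n _ hx i => (hP i).shift n (hx i)
  · exact fun T hT h₁ h₂ i => (hP i).ext₃ T hT (h₁ i) (h₂ i)
  · exact fun T hT h₁ h₃ i => (hP i).ext₂ T hT (h₁ i) (h₃ i)
  · exact fun T hT h₂ h₃ i => (hP i).ext₁ T hT (h₂ i) (h₃ i)
  · exact fun s _ hs i => (hP i).coprod s (hs · i)

theorem IsLocalizing.preimage_s2 (F : C ⥤ C') [F.CommShift ℤ] [F.IsTriangulated]
    [∀ J : Type w, PreservesColimitsOfShape (Discrete J) F]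
    {P : Set C'} (hP : IsLocalizing.{w} P) : IsLocalizing.{w} (F.obj ⁻¹' P) where
  of_iso e hx := hP.of_iso (F.mapIso e) hx
  shift n _ hx := hP.of_iso ((F.commShiftIso n).app _).symm (hP.shift n hx)
  ext₃ T hT := hP.ext₃ _ (F.map_distinguished T hT)
  ext₂ T hT := hP.ext₂ _ (F.map_distinguished T hT)
  ext₁ T hT := hP.ext₁ _ (F.map_distinguished T hT)
  coprod s _ hs :=
    have : HasCoproduct fun j => F.obj (s j) :=
      hasColimit_of_iso (Discrete.compNatIsoDiscrete s F).symm
    hP.of_iso (PreservesCoproduct.iso F s).symm (hP.coprod _ hs)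

theorem IsLocalizingTensorIdeal.iInter [MonoidalCategory C] {ι : Sort*} {P : ι → Set C}
    (hP : ∀ i, IsLocalizingTensorIdeal.{w} (P i)) : IsLocalizingTensorIdeal.{w} (⋂ i, P i) where
  toIsLocalizing := .iInter fun i => (hP i).toIsLocalizing
  tensor a _ hx := Set.mem_iInter.2 fun i => (hP i).tensor a (Set.mem_iInter.1 hx i)

theorem isLocalizingTensorIdeal_setOf_locTensorMem [MonoidalCategory C] (S : Set C) :
    IsLocalizingTensorIdeal.{w} {x | LocTensorMem.{w} S x} := by
  have : {x | LocTensorMem.{w} S x} =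
      ⋂ P : {P : Set C // IsLocalizingTensorIdeal.{w} P ∧ S ⊆ P}, P.1 := by
    ext
    simp [LocTensorMem]
  exact this ▸ .iInter fun P => P.2.1

theorem subset_setOf_locTensorMem [MonoidalCategory C] (S : Set C) :
    S ⊆ {x | LocTensorMem.{w} S x} :=
  fun _ hx _ _ hS => hS hx

theorem IsLocalizingTensorIdeal.preimage_s2 [MonoidalCategory C] [MonoidalCategory C']
    (F : C ⥤ C') [F.CommShift ℤ] [F.IsTriangulated] [F.Monoidal]
    [∀ J : Type w, PreservesColimitsOfShape (Discrete J) F]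
    {P : Set C'} (hP : IsLocalizingTensorIdeal.{w} P) :
    IsLocalizingTensorIdeal.{w} (F.obj ⁻¹' P) where
  toIsLocalizing := hP.toIsLocalizing.preimage_s2 F
  tensor a z hz := hP.of_iso (Functor.Monoidal.μIso F a z) (hP.tensor (F.obj a) hz)

theorem LocTensorMem.map [MonoidalCategory C] [MonoidalCategory C']
    (F : C ⥤ C') [F.CommShift ℤ] [F.IsTriangulated] [F.Monoidal]
    [∀ J : Type w, PreservesColimitsOfShape (Discrete J) F]
    {S : Set C} {x : C} (hx : LocTensorMem.{w} S x) :
    LocTensorMem.{w} (F.obj '' S) (F.obj x) :=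
  fun _ hP hS => hx _ (hP.preimage_s2 F) (Set.image_subset_iff.1 hS)

theorem IsLocalizingTensorIdeal.iInter_preimage_tensorLeft_comp [MonoidalCategory C']
    [∀ a : C', (tensorLeft a).CommShift ℤ] [∀ a : C', (tensorLeft a).IsTriangulated]
    [∀ (a : C') (J : Type w), PreservesColimitsOfShape (Discrete J) (tensorLeft a)]
    (g : C' ⥤ C) [g.CommShift ℤ] [g.IsTriangulated]
    [∀ J : Type w, PreservesColimitsOfShape (Discrete J) g]
    {P : Set C} (hP : IsLocalizing.{w} P) :
    IsLocalizingTensorIdeal.{w} (⋂ a : C', (tensorLeft a ⋙ g).obj ⁻¹' P) where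
  toIsLocalizing := .iInter fun a => hP.preimage_s2 (tensorLeft a ⋙ g)
  tensor b w hw := Set.mem_iInter.2 fun a =>
    hP.of_iso (g.mapIso (α_ a b w)) (Set.mem_iInter.1 hw (a ⊗ b))

theorem tensor_obj_unit_mem_of_locTensorMem_image
    [MonoidalCategory C] [BraidedCategory C] [MonoidalCategory C'] [BraidedCategory C']
    [∀ a : C', (tensorLeft a).CommShift ℤ] [∀ a : C', (tensorLeft a).IsTriangulated]
    [∀ (a : C') (J : Type w), PreservesColimitsOfShape (Discrete J) (tensorLeft a)]
    (f : C ⥤ C') (g : C' ⥤ C) [g.CommShift ℤ] [g.IsTriangulated]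
    [∀ J : Type w, PreservesColimitsOfShape (Discrete J) g]
    (proj : ∀ (x : C) (y : C'), Nonempty (g.obj (f.obj x ⊗ y) ≅ x ⊗ g.obj y))
    {P : Set C} (hP : IsLocalizingTensorIdeal.{w} P) {S : Set C} (hS : S ⊆ P) {x : C}
    (hx : LocTensorMem.{w} (f.obj '' S) (f.obj x)) : x ⊗ g.obj (𝟙_ C') ∈ P := by
  set Q := ⋂ a : C', (tensorLeft a ⋙ g).obj ⁻¹' P
  have hQ : IsLocalizingTensorIdeal.{w} Q :=
    .iInter_preimage_tensorLeft_comp g hP.toIsLocalizing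
  have hSQ : f.obj '' S ⊆ Q := by
    rintro _ ⟨s, hs, rfl⟩
    refine Set.mem_iInter.2 fun a => hP.of_iso ?_ (hP.tensor (g.obj a) (hS hs))
    exact β_ _ _ ≪≫ (proj s a).some.symm ≪≫ g.mapIso (β_ _ _)
  have hxQ := Set.mem_iInter.1 (hx Q hQ hSQ) (𝟙_ C')
  exact hP.of_iso (g.mapIso (β_ _ _) ≪≫ (proj x _).some) hxQ

theorem IsLocalizingTensorIdeal.preimage_tensorLeft_s2 [MonoidalCategory C] [BraidedCategory C]
    (x : C) [(tensorLeft x).CommShift ℤ] [(tensorLeft x).IsTriangulated]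
    [∀ J : Type w, PreservesColimitsOfShape (Discrete J) (tensorLeft x)]
    {P : Set C} (hP : IsLocalizingTensorIdeal.{w} P) :
    IsLocalizingTensorIdeal.{w} ((tensorLeft x).obj ⁻¹' P) where
  toIsLocalizing := hP.toIsLocalizing.preimage_s2 (tensorLeft x)
  tensor a z hz :=
    hP.of_iso ((α_ a x z).symm ≪≫ whiskerRightIso (β_ a x) z ≪≫ α_ x a z) (hP.tensor a hz)

theorem IsLocalizingTensorIdeal.mem_of_forall_tensor_mem [MonoidalCategory C]
    [BraidedCategory C] {P : Set C} (hP : IsLocalizingTensorIdeal.{w} P) {J : Type w}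
    (s : J → C) [HasCoproduct s] (hunit : LocTensorMem.{w} {∐ s} (𝟙_ C)) {x : C}
    [(tensorLeft x).CommShift ℤ] [(tensorLeft x).IsTriangulated]
    [∀ J : Type w, PreservesColimitsOfShape (Discrete J) (tensorLeft x)]
    (hx : ∀ j, x ⊗ s j ∈ P) : x ∈ P := by
  have hQ := hP.preimage_tensorLeft_s2 x
  exact hP.of_iso (ρ_ x) (hunit _ hQ (Set.singleton_subset_iff.2 (hQ.coprod s hx)))

end Localizing

/-- Let `{f i : D ⥤ Di i}` be a family of coproduct-preserving tt-functors between
tt-categories with small coproducts, such that each `f i` admits a coproduct-preserving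
triangulated right adjoint `g i` satisfying the projection formula. If the monoidal unit
`𝟙_ D` lies in `Loc^⊗(∐ᵢ (g i).obj (𝟙_ (Di i)))`, then for every object `x` of `D` one has
(Building) for any objects `x`, `y` of `D`, one has `x ∈ Loc^⊗(y)` if and only if
`(f i).obj x ∈ Loc^⊗((f i).obj y)` for all `i`. -/
theorem building_of_unit_mem
    {I : Type w}
    -- `D` is a tt-category with small coproducts
    {D : Type u} [Category.{v} D] [HasZeroObject D] [HasShift D ℤ] [Preadditive D]
    [∀ n : ℤ, (shiftFunctor D n).Additive] [Pretriangulated D]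
    [MonoidalCategory D] [SymmetricCategory D] [HasCoproducts.{w} D]
    [∀ a : D, (tensorLeft a).CommShift ℤ] [∀ a : D, (tensorLeft a).IsTriangulated]
    [∀ (a : D) (J : Type w), PreservesColimitsOfShape (Discrete J) (tensorLeft a)]
    -- each `Di i` is a tt-category with small coproducts
    {Di : I → Type u'} [∀ i, Category.{v'} (Di i)] [∀ i, HasZeroObject (Di i)]
    [∀ i, HasShift (Di i) ℤ] [∀ i, Preadditive (Di i)]
    [∀ (i : I) (n : ℤ), (shiftFunctor (Di i) n).Additive] [∀ i, Pretriangulated (Di i)]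
    [∀ i, MonoidalCategory (Di i)] [∀ i, SymmetricCategory (Di i)]
    [∀ i, HasCoproducts.{w} (Di i)]
    [∀ (i : I) (a : Di i), (tensorLeft a).CommShift ℤ]
    [∀ (i : I) (a : Di i), (tensorLeft a).IsTriangulated]
    [∀ (i : I) (a : Di i) (J : Type w), PreservesColimitsOfShape (Discrete J) (tensorLeft a)]
    -- the `f i` are coproduct-preserving tt-functors
    (f : ∀ i, D ⥤ Di i)
    [∀ i, (f i).Additive] [∀ i, (f i).CommShift ℤ] [∀ i, (f i).IsTriangulated]
    [∀ i, (f i).Monoidal]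
    [∀ (i : I) (J : Type w), PreservesColimitsOfShape (Discrete J) (f i)]
    -- the `g i` are coproduct-preserving triangulated right adjoints of the `f i`
    (g : ∀ i, Di i ⥤ D)
    [∀ i, (g i).Additive] [∀ i, (g i).CommShift ℤ] [∀ i, (g i).IsTriangulated]
    [∀ (i : I) (J : Type w), PreservesColimitsOfShape (Discrete J) (g i)]
    (adj : ∀ i, f i ⊣ g i)
    -- the projection formula holds for each adjunction `f i ⊣ g i`
    (proj : ∀ (i : I) (x : D) (y : Di i),
      Nonempty ((g i).obj ((f i).obj x ⊗ y) ≅ x ⊗ (g i).obj y))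
    -- the unit is built from the `(g i).obj (𝟙_ (Di i))`
    (hunit : LocTensorMem.{w} {∐ fun i => (g i).obj (𝟙_ (Di i))} (𝟙_ D))
    (x y : D) :
    LocTensorMem.{w} {y} x ↔ ∀ i, LocTensorMem.{w} {(f i).obj y} ((f i).obj x) := by
  refine ⟨fun hx i => by simpa only [Set.image_singleton] using hx.map (f i), fun h => ?_⟩
  have hP := isLocalizingTensorIdeal_setOf_locTensorMem.{w} ({y} : Set D)
  refine hP.mem_of_forall_tensor_mem _ hunit fun i => ?_
  refine tensor_obj_unit_mem_of_locTensorMem_image (f i) (g i) (proj i) hP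
    (subset_setOf_locTensorMem _) ?_
  simpa only [Set.image_singleton] using h i
end

section
/- Let R be a commutative ring and G a nontrivial finite group. For each prime p dividing the order of G, choose a Sylow p-subgroup S_p of G. Then the trivial representation R is a retract of the direct sum ⊕_{p | |G|} R[G/S_p] in the category Rep R G: there exist morphisms ι : R → ⊕_{p | |G|} R[G/S_p] and ρ : ⊕_{p | |G|} R[G/S_p] → R of R-linear G-representations with ρ ∘ ι = id. -/
open CategoryTheory Limits

universe u

/-!
For a finite `G`-set `X`, composing `R → R[X]`, `1 ↦ ∑ₓ x`, with the augmentation `R[X] → R` is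
multiplication by `|X|`. The indices `[G : S_p]` have no common prime factor: `p ∤ [G : S_p]`, and
a prime dividing an index divides `|G|`. Bézout gives integers `c_p` with `∑ c_p [G : S_p] = 1`,
and the `c_p`-weighted sum of those maps splits the augmentation `∐ R[G/S_p] → R`.
-/

lemma Int.exists_sum_mul_eq_one_of_forall_prime_exists_not_dvd {ι : Type*} [Fintype ι]
    (f : ι → ℕ) (h : ∀ q : ℕ, q.Prime → ∃ i, ¬q ∣ f i) :
    ∃ c : ι → ℤ, ∑ i, (f i : ℤ) * c i = 1 := by
  classical
  obtain ⟨c, hc⟩ := Finset.gcd_eq_sum_mul Finset.univ (fun i ↦ (f i : ℤ))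
  refine ⟨c, hc ▸ ?_⟩
  rw [← Finset.normalize_gcd, normalize_eq_one, Int.isUnit_iff_natAbs_eq,
    Nat.eq_one_iff_not_exists_prime_dvd]
  intro q hq hq_dvd
  obtain ⟨i, hi⟩ := h q hq
  exact hi <| Int.natCast_dvd_natCast.mp <|
    (Int.natCast_dvd.mpr hq_dvd).trans (Finset.gcd_dvd (Finset.mem_univ i))

lemma Sylow.exists_not_dvd_index {G : Type*} [Group G] [Finite G] [Nontrivial G]
    (S : ∀ p ∈ (Nat.card G).primeFactors, Sylow p G) {q : ℕ} (hq : q.Prime) :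
    ∃ p : {p // p ∈ (Nat.card G).primeFactors}, ¬q ∣ (S p.1 p.2 : Subgroup G).index := by
  by_cases hqG : q ∣ Nat.card G
  · have hqP : q ∈ (Nat.card G).primeFactors :=
      Nat.mem_primeFactors.mpr ⟨hq, hqG, Nat.card_pos.ne'⟩
    have : Fact q.Prime := ⟨hq⟩
    exact ⟨⟨q, hqP⟩, (S q hqP).not_dvd_index⟩
  · obtain ⟨p, hp⟩ := Nat.nonempty_primeFactors.mpr (Finite.one_lt_card (α := G))
    exact ⟨⟨p, hp⟩, fun h ↦ hqG (h.trans (Subgroup.index_dvd_card _))⟩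

lemma Sylow.exists_sum_index_mul_eq_one {G : Type*} [Group G] [Finite G] [Nontrivial G]
    (S : ∀ p ∈ (Nat.card G).primeFactors, Sylow p G) :
    ∃ c : {p // p ∈ (Nat.card G).primeFactors} → ℤ,
      ∑ p, ((S p.1 p.2 : Subgroup G).index : ℤ) * c p = 1 :=
  Int.exists_sum_mul_eq_one_of_forall_prime_exists_not_dvd _ fun _ hq ↦ exists_not_dvd_index S hq

namespace CategoryTheory.Retract

variable {R : Type*} [Semiring R] {C : Type*} [Category C] [Preadditive C] [Linear R C]
  {ι : Type*} [Fintype ι]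

noncomputable def sigmaOfSumMulEqOne {A : C} (X : ι → C) [HasCoproduct X] (i : ∀ j, A ⟶ X j)
    (r : ∀ j, X j ⟶ A) (n c : ι → R) (hir : ∀ j, i j ≫ r j = n j • 𝟙 A)
    (hc : ∑ j, c j * n j = 1) : Retract A (∐ X) where
  i := ∑ j, c j • (i j ≫ Sigma.ι X j)
  r := Limits.Sigma.desc r
  retract := by
    simp only [Preadditive.sum_comp, Linear.smul_comp, Category.assoc, colimit.ι_desc,
      Cofan.mk_ι_app, hir, smul_smul, ← Finset.sum_smul, hc, one_smul]

end CategoryTheory.Retract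

theorem Representation.ofMulAction_sum_single_one (R : Type*) [Semiring R] {G : Type*} [Group G]
    (X : Type*) [MulAction G X] [Fintype X] (g : G) :
    Representation.ofMulAction R G X g (∑ x : X, MonoidAlgebra.single x 1) =
      ∑ x : X, MonoidAlgebra.single x 1 := by
  simp only [map_sum, Representation.ofMulAction_single]
  exact Fintype.sum_equiv (MulAction.toPerm g) _ _ fun _ ↦ rfl

namespace Rep

variable (R : Type u) [CommRing R] {G : Type u} [Group G] (X : Type u) [MulAction G X]

noncomputable def ofMulActionAugmentation : ofMulAction R G X ⟶ trivial R G R :=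
  ofHom ⟨Finsupp.linearCombination R (fun _ ↦ (1 : R)) ∘ₗ
      (MonoidAlgebra.coeffLinearEquiv R).toLinearMap,
    fun _ ↦ MonoidAlgebra.lhom_ext' fun _ ↦ LinearMap.ext_ring <| by simp⟩

noncomputable def ofMulActionCoaugmentation [Fintype X] : trivial R G R ⟶ ofMulAction R G X :=
  ofHom ⟨LinearMap.toSpanSingleton R _ (∑ x : X, MonoidAlgebra.single x 1),
    fun g ↦ LinearMap.ext_ring <| by
      simpa using (Representation.ofMulAction_sum_single_one R X g).symm⟩

lemma ofMulActionCoaugmentation_comp_augmentation [Fintype X] :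
    ofMulActionCoaugmentation R X ≫ ofMulActionAugmentation R X =
      (Nat.card X : R) • 𝟙 (trivial R G R) := by
  ext1; ext1
  refine LinearMap.ext_ring ?_
  simp [ofMulActionCoaugmentation, ofMulActionAugmentation, Rep.smul_hom]

end Rep

/-- Let `R` be a commutative ring and `G` a nontrivial finite group. For each prime `p`
dividing `|G|`, choose a Sylow `p`-subgroup `S p` of `G`. Then the trivial representation `R`
is a retract of `⊕_{p ∣ |G|} R[G / S p]` in `Rep R G`. -/
theorem trivial_rep_retract_of_sum_over_sylow (R : Type u) [CommRing R]
    (G : Type u) [Group G] [Finite G] [Nontrivial G]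
    (S : ∀ p ∈ (Nat.card G).primeFactors, Sylow p G) :
    ∃ (ι : Rep.trivial R G R ⟶
        ∐ fun p : {q // q ∈ (Nat.card G).primeFactors} =>
          Rep.ofMulAction R G (G ⧸ (S p.1 p.2 : Subgroup G)))
      (ρ : (∐ fun p : {q // q ∈ (Nat.card G).primeFactors} =>
          Rep.ofMulAction R G (G ⧸ (S p.1 p.2 : Subgroup G))) ⟶ Rep.trivial R G R),
      ι ≫ ρ = 𝟙 (Rep.trivial R G R) := by
  have := fun p : {q // q ∈ (Nat.card G).primeFactors} ↦
    Fintype.ofFinite (G ⧸ (S p.1 p.2 : Subgroup G))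
  obtain ⟨c, hc⟩ := Sylow.exists_sum_index_mul_eq_one S
  have e : Retract (Rep.trivial R G R) (∐ fun p : {q // q ∈ (Nat.card G).primeFactors} =>
      Rep.ofMulAction R G (G ⧸ (S p.1 p.2 : Subgroup G))) :=
    Retract.sigmaOfSumMulEqOne _
      (fun p ↦ Rep.ofMulActionCoaugmentation R (G ⧸ (S p.1 p.2 : Subgroup G)))
      (fun p ↦ Rep.ofMulActionAugmentation R (G ⧸ (S p.1 p.2 : Subgroup G)))
      (fun p ↦ ((S p.1 p.2 : Subgroup G).index : R)) (fun p ↦ (c p : R))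
      (fun p ↦ by rw [Rep.ofMulActionCoaugmentation_comp_augmentation, Subgroup.index_eq_card])
      (by simpa [mul_comm] using congr(($hc : R)))
  exact ⟨e.i, e.r, e.retract⟩
end

section
/- (Mackey decomposition of G-sets) Let G be a group and H, K subgroups of G. Choose for each double coset d ∈ H\G/K a representative g_d ∈ G. Then there is a bijection e : (G/H) × (G/K) ≃ Σ_{d ∈ H\G/K} G/(H ∩ g_d K g_d^{-1}) which is G-equivariant, where G acts diagonally on the product (G/H) × (G/K), on the right-hand side by its action on each coset space G/(H ∩ g_d K g_d^{-1}) (fixing the index d), and g_d K g_d^{-1} denotes the conjugate subgroup. -/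
/-! The diagonal `G`-set `G ⧸ H × G ⧸ K` is the disjoint union of its orbits, each of which is
`G ⧸ stabilizer` of any of its points. The orbit of `(aH, bK)` is determined by the double coset
`H a⁻¹ b K`, so the points `(H, g_d K)` form a system of orbit representatives, and the stabilizer
of `(H, g_d K)` is `H ∩ g_d K g_d⁻¹`. -/

universe u

open MulAction

section OrbitDecomposition

variable {G X ι : Type*} [Group G] [MulAction G X]

theorem MulAction.stabilizer_prodMk {Y : Type*} [MulAction G Y] (x : X) (y : Y) :
    stabilizer G (x, y) = stabilizer G x ⊓ stabilizer G y := by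
  ext s
  simp [Prod.ext_iff]

theorem MulAction.exists_smul_equiv_sigma_quotient_of_orbit_reps (x : ι → X)
    (hcover : ∀ y, ∃ i, y ∈ orbit G (x i)) (hdisj : Function.Injective fun i => orbit G (x i))
    (L : ι → Subgroup G) (hL : ∀ i, stabilizer G (x i) = L i) :
    ∃ e : X ≃ Σ i, G ⧸ L i, ∀ (s : G) (y : X), e (s • y) = s • e y := by
  obtain rfl : (fun i => stabilizer G (x i)) = L := funext hL
  let ψ : (Σ i, G ⧸ stabilizer G (x i)) → X := fun p => ofQuotientStabilizer G (x p.1) p.2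
  have ψ_injective : Function.Injective ψ := by
    rintro ⟨i, q⟩ ⟨j, q'⟩ h
    obtain rfl : i = j := hdisj <| calc
      orbit G (x i) = orbit G (ψ ⟨i, q⟩) :=
        (orbit_eq_iff.mpr (ofQuotientStabilizer_mem_orbit ..)).symm
      _ = orbit G (ψ ⟨j, q'⟩) := by rw [h]
      _ = orbit G (x j) := orbit_eq_iff.mpr (ofQuotientStabilizer_mem_orbit ..)
    exact congrArg _ (injective_ofQuotientStabilizer G (x i) h)
  have ψ_surjective : Function.Surjective ψ := by
    intro y
    obtain ⟨i, s, rfl⟩ := hcover y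
    exact ⟨⟨i, s⟩, rfl⟩
  let e := Equiv.ofBijective ψ ⟨ψ_injective, ψ_surjective⟩
  refine ⟨e.symm, fun s y => e.symm_apply_eq.mpr ?_⟩
  calc s • y = s • ψ (e.symm y) := congrArg (s • ·) (e.apply_symm_apply y).symm
    _ = ψ (s • e.symm y) := (ofQuotientStabilizer_smul G _ s _).symm

end OrbitDecomposition

section Mackey

variable {G : Type*} [Group G] (H K : Subgroup G)

theorem MulAction.stabilizer_quotient_mk (a : G) :
    stabilizer G (a : G ⧸ K) = K.map (MulAut.conj a).toMonoidHom := by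
  have ha : (a : G ⧸ K) = a • ((1 : G) : G ⧸ K) := by
    rw [Quotient.smul_mk, smul_eq_mul, mul_one]
  rw [ha, stabilizer_smul_eq_stabilizer_map_conj, stabilizer_quotient]

theorem QuotientGroup.mk_prodMk_mem_orbit_iff (a b c : G) :
    ((a : G ⧸ H), (b : G ⧸ K)) ∈ orbit G (((1 : G) : G ⧸ H), (c : G ⧸ K)) ↔
      DoubleCoset.mk H K c = DoubleCoset.mk H K (a⁻¹ * b) := by
  simp only [mem_orbit_iff, DoubleCoset.eq, Prod.smul_mk, Quotient.smul_mk, smul_eq_mul,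
    mul_one, Prod.mk.injEq, QuotientGroup.eq]
  constructor
  · rintro ⟨s, hsa, hsb⟩
    exact ⟨a⁻¹ * s, by simpa using H.inv_mem hsa, (s * c)⁻¹ * b, hsb, by group⟩
  · rintro ⟨h, hh, k, hk, hab⟩
    obtain rfl : b = a * (h * c * k) := by rw [← hab, mul_inv_cancel_left]
    exact ⟨a * h, by simpa using hh, by simpa [mul_assoc] using hk⟩

end Mackey

/-- (Mackey decomposition of `G`-sets) Let `G` be a group and `H`, `K` subgroups of `G`.
Choose for every double coset `d ∈ H\G/K` a representative `g d ∈ G`. Then there is a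
`G`-equivariant bijection `(G/H) × (G/K) ≃ Σ_{d ∈ H\G/K} G/(H ∩ g d • K • (g d)⁻¹)`, where
`G` acts diagonally on the product and on each coset space on the right-hand side. -/
theorem mackey_decomposition_of_G_sets (G : Type u) [Group G] (H K : Subgroup G)
    (g : DoubleCoset.Quotient (H : Set G) (K : Set G) → G)
    (hg : ∀ d, DoubleCoset.mk H K (g d) = d) :
    ∃ e : (G ⧸ H) × (G ⧸ K) ≃
        Σ d : DoubleCoset.Quotient (H : Set G) (K : Set G),
          G ⧸ (H ⊓ Subgroup.map (MulAut.conj (g d)).toMonoidHom K),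
      ∀ (s : G) (x : (G ⧸ H) × (G ⧸ K)), e (s • x) = s • e x := by
  refine exists_smul_equiv_sigma_quotient_of_orbit_reps
    (fun d => (((1 : G) : G ⧸ H), (g d : G ⧸ K))) ?_ ?_ _ fun d => ?_
  · rintro ⟨⟨a⟩, ⟨b⟩⟩
    exact ⟨DoubleCoset.mk H K (a⁻¹ * b),
      (QuotientGroup.mk_prodMk_mem_orbit_iff H K a b _).mpr (hg _)⟩
  · intro d d' hdd'
    have hmk := (QuotientGroup.mk_prodMk_mem_orbit_iff H K 1 (g d') (g d)).mp
      (orbit_eq_iff.mp hdd'.symm)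
    rwa [inv_one, one_mul, hg, hg] at hmk
  · rw [stabilizer_prodMk, stabilizer_quotient, stabilizer_quotient_mk]
end

section
/- (Mackey formula for permutation modules) Let R be a commutative ring, G a group, and H, K subgroups of G. Choose for each double coset d ∈ H\G/K a representative g_d ∈ G. Then there is an isomorphism in Rep R G: R[G/H] ⊗ R[G/K] ≅ ⊕_{d ∈ H\G/K} R[G/(H ∩ g_d K g_d^{-1})], where the tensor product is ⊗_R with diagonal G-action and g_d K g_d^{-1} denotes the conjugate subgroup. -/
/-!
The diagonal `G`-set `G ⧸ H × G ⧸ K` splits into `G`-orbits indexed by `H \ G ⧸ K`: the orbit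
of `(H, g K)` consists of the pairs `(b H, c K)` with `H b⁻¹ c K = H g K`, and its stabilizer is
`H ⊓ g K g⁻¹`. Linearisation `X ↦ R[X]` is monoidal and, being left adjoint to the forgetful
functor, turns this disjoint union of orbits into a coproduct of permutation representations.
-/

open CategoryTheory MonoidalCategory Limits

universe u

namespace Subgroup
variable {G : Type*} [Group G]

theorem mem_inf_map_conj_iff {H K : Subgroup G} {a x : G} :
    x ∈ H ⊓ K.map (MulAut.conj a).toMonoidHom ↔ x ∈ H ∧ a⁻¹ * x * a ∈ K := by
  rw [mem_inf, mem_map_equiv, MulAut.conj_symm_apply]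

end Subgroup

namespace QuotientGroup
variable {G : Type*} [Group G] (H K : Subgroup G) (a : G)

theorem mk_eq_mk_iff_inf_map_conj {c c' : G} :
    (c : G ⧸ H ⊓ K.map (MulAut.conj a).toMonoidHom) = c' ↔
      (c : G ⧸ H) = c' ∧ ((c * a : G) : G ⧸ K) = (c' * a : G) := by
  simp only [QuotientGroup.eq, Subgroup.mem_inf_map_conj_iff, mul_inv_rev, mul_assoc]

def cosetPair : G ⧸ H ⊓ K.map (MulAut.conj a).toMonoidHom → (G ⧸ H) × (G ⧸ K) :=
  Quotient.lift (fun c : G => ((c : G ⧸ H), ((c * a : G) : G ⧸ K)))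
    fun _ _ h => Prod.ext_iff.2 ((mk_eq_mk_iff_inf_map_conj H K a).1 (Quotient.sound h))

@[simp]
theorem cosetPair_mk (c : G) : cosetPair H K a c = ((c : G ⧸ H), ((c * a : G) : G ⧸ K)) := rfl

theorem cosetPair_injective : Function.Injective (cosetPair H K a) := by
  rintro ⟨c⟩ ⟨c'⟩ h
  exact (mk_eq_mk_iff_inf_map_conj H K a).2 (Prod.ext_iff.1 h)

theorem cosetPair_smul (x : G) (q : G ⧸ H ⊓ K.map (MulAut.conj a).toMonoidHom) :
    cosetPair H K a (x • q) = x • cosetPair H K a q := by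
  obtain ⟨c, rfl⟩ := QuotientGroup.mk_surjective q
  simp only [MulAction.Quotient.smul_mk, cosetPair_mk, Prod.smul_mk, smul_eq_mul, mul_assoc]

theorem mk_mem_range_cosetPair_iff (b c : G) :
    ((b : G ⧸ H), (c : G ⧸ K)) ∈ Set.range (cosetPair H K a) ↔
      DoubleCoset.mk H K a = DoubleCoset.mk H K (b⁻¹ * c) := by
  rw [DoubleCoset.eq]
  constructor
  · rintro ⟨q, hq⟩
    obtain ⟨x, rfl⟩ := QuotientGroup.mk_surjective q
    simp only [cosetPair_mk, Prod.mk.injEq, QuotientGroup.eq] at hq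
    refine ⟨b⁻¹ * x, by simpa using H.inv_mem hq.1, (x * a)⁻¹ * c, hq.2, by group⟩
  · rintro ⟨h, hh, k, hk, e⟩
    refine ⟨(b * h : G), ?_⟩
    rw [cosetPair_mk, Prod.mk.injEq, QuotientGroup.eq, QuotientGroup.eq]
    constructor
    · simpa using H.inv_mem hh
    · simpa [e, mul_assoc] using hk

end QuotientGroup

namespace DoubleCoset

variable {G : Type*} [Group G] (H K : Subgroup G) (g : Quotient (H : Set G) K → G)

def sigmaCosetPair :
    (Σ d, G ⧸ H ⊓ K.map (MulAut.conj (g d)).toMonoidHom) → (G ⧸ H) × (G ⧸ K) :=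
  fun x => QuotientGroup.cosetPair H K (g x.1) x.2

theorem sigmaCosetPair_bijective (hg : ∀ d, mk H K (g d) = d) :
    Function.Bijective (sigmaCosetPair H K g) := by
  constructor
  · rintro ⟨d, p⟩ ⟨d', p'⟩ hpp'
    obtain ⟨b, c, hbc⟩ :
        ∃ b c : G, sigmaCosetPair H K g ⟨d', p'⟩ = ((b : G ⧸ H), (c : G ⧸ K)) :=
      ⟨_, _, Prod.ext (QuotientGroup.out_eq' _).symm (QuotientGroup.out_eq' _).symm⟩
    have hd : d = d' := by
      rw [← hg d, ← hg d',
        (QuotientGroup.mk_mem_range_cosetPair_iff H K _ b c).1 ⟨p, hpp'.trans hbc⟩,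
        (QuotientGroup.mk_mem_range_cosetPair_iff H K _ b c).1 ⟨p', hbc⟩]
    subst hd
    exact congrArg _ (QuotientGroup.cosetPair_injective H K _ hpp')
  · rintro ⟨⟨b⟩, ⟨c⟩⟩
    obtain ⟨p, hp⟩ :=
      (QuotientGroup.mk_mem_range_cosetPair_iff H K _ b c).2 (hg (mk H K (b⁻¹ * c)))
    exact ⟨⟨_, p⟩, hp⟩

theorem sigmaCosetPair_smul (x : G) (p : Σ d, G ⧸ H ⊓ K.map (MulAut.conj (g d)).toMonoidHom) :
    sigmaCosetPair H K g (x • p) = x • sigmaCosetPair H K g p :=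
  QuotientGroup.cosetPair_smul H K _ x p.2

end DoubleCoset

namespace Action
variable {G : Type*} [Monoid G]

variable (G) in
def ofMulActionSigmaCofan {ι : Type u} (X : ι → Type u) [∀ i, MulAction G (X i)] :
    Cofan fun i => ofMulAction G (X i) :=
  Cofan.mk (ofMulAction G (Σ i, X i)) fun i => ⟨TypeCat.ofHom (Sigma.mk i), fun _ => rfl⟩

variable (G) in
noncomputable def ofMulActionSigmaCofanIsColimit {ι : Type u} (X : ι → Type u)
    [∀ i, MulAction G (X i)] :
    IsColimit (ofMulActionSigmaCofan G X) :=
  isColimitOfReflects (Action.forget (Type u) G)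
    { desc := fun s => TypeCat.ofHom fun p => s.ι.app ⟨p.1⟩ p.2
      fac := fun s => by rintro ⟨i⟩; rfl
      uniq := fun s m hm => by ext p; exact types_congr_hom (hm ⟨p.1⟩) p.2 }

def ofMulActionIsoOfEquiv {X Y : Type u} [MulAction G X] [MulAction G Y] (e : X ≃ Y)
    (he : ∀ (g : G) x, e (g • x) = g • e x) : ofMulAction G X ≅ ofMulAction G Y :=
  Action.mkIso e.toIso fun g => by ext x; exact he g x

variable (G) in
def ofMulActionTensorIso (X Y : Type u) [MulAction G X] [MulAction G Y] :
    ofMulAction G X ⊗ ofMulAction G Y ≅ ofMulAction G (X × Y) :=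
  Action.mkIso (Iso.refl _) fun _ => rfl

end Action

namespace Rep
variable (R : Type u) [CommRing R] (G : Type u) [Monoid G]

noncomputable def forgetCompFreeIsoLinearizationCompForget₂ :
    Action.forget (Type u) G ⋙ ModuleCat.free R ≅
      linearization R G ⋙ forget₂ (Rep R G) (ModuleCat R) :=
  NatIso.ofComponents (fun _ => (MonoidAlgebra.coeffLinearEquiv R).symm.toModuleIso)
    fun _ => ModuleCat.free_hom_ext fun _ => rfl

instance preservesColimits_linearization :
    PreservesColimitsOfSize.{u, u} (linearization.{u, u} R G) := by
  have : PreservesColimitsOfSize.{u, u} (ModuleCat.free R) :=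
    (ModuleCat.adj R).leftAdjoint_preservesColimits
  have : PreservesColimitsOfSize.{u, u} (linearization R G ⋙ forget₂ (Rep R G) (ModuleCat R)) :=
    preservesColimits_of_natIso (forgetCompFreeIsoLinearizationCompForget₂ R G)
  exact preservesColimits_of_reflects_of_preserves _ (forget₂ (Rep R G) (ModuleCat R))

variable {R G}

noncomputable def ofMulActionIsoOfEquiv {X Y : Type u} [MulAction G X] [MulAction G Y]
    (e : X ≃ Y) (he : ∀ (g : G) x, e (g • x) = g • e x) :
    ofMulAction R G X ≅ ofMulAction R G Y :=
  (linearizationOfMulActionIso R G X).symm ≪≫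
    (linearization R G).mapIso (Action.ofMulActionIsoOfEquiv e he) ≪≫
    linearizationOfMulActionIso R G Y

variable (R G)

noncomputable def ofMulActionTensorIso (X Y : Type u) [MulAction G X] [MulAction G Y] :
    ofMulAction R G X ⊗ ofMulAction R G Y ≅ ofMulAction R G (X × Y) :=
  (tensorIso (linearizationOfMulActionIso R G X) (linearizationOfMulActionIso R G Y)).symm ≪≫
    Functor.Monoidal.μIso (linearization R G) _ _ ≪≫
    (linearization R G).mapIso (Action.ofMulActionTensorIso G X Y) ≪≫
    linearizationOfMulActionIso R G (X × Y)

noncomputable def ofMulActionSigmaIso {ι : Type u} (X : ι → Type u) [∀ i, MulAction G (X i)] :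
    ofMulAction R G (Σ i, X i) ≅ ∐ fun i => ofMulAction R G (X i) :=
  (linearizationOfMulActionIso R G _).symm ≪≫
    (isColimitOfPreserves (linearization R G)
      (Action.ofMulActionSigmaCofanIsColimit G X)).coconePointUniqueUpToIso
      (colimit.isColimit _) ≪≫
    HasColimit.isoOfNatIso (Discrete.natIso fun i => linearizationOfMulActionIso R G (X i.as))

end Rep

/-- (Mackey formula for permutation modules) Let `R` be a commutative ring, `G` a group and
`H`, `K` subgroups of `G`. Choose for every double coset `d ∈ H\G/K` a representative
`g d ∈ G`. Then there is an isomorphism in `Rep R G`: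
`R[G/H] ⊗ R[G/K] ≅ ⊕_{d ∈ H\G/K} R[G/(H ∩ g d K (g d)⁻¹)]`. -/
theorem mackey_formula_for_permutation_modules (R : Type u) [CommRing R]
    (G : Type u) [Group G] (H K : Subgroup G)
    (g : DoubleCoset.Quotient (H : Set G) (K : Set G) → G)
    (hg : ∀ d, DoubleCoset.mk H K (g d) = d) :
    Nonempty (Rep.ofMulAction R G (G ⧸ H) ⊗ Rep.ofMulAction R G (G ⧸ K) ≅
      ∐ fun d : DoubleCoset.Quotient (H : Set G) (K : Set G) =>
        Rep.ofMulAction R G (G ⧸ (H ⊓ Subgroup.map (MulAut.conj (g d)).toMonoidHom K))) :=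
  ⟨Rep.ofMulActionTensorIso R G _ _ ≪≫
    (Rep.ofMulActionIsoOfEquiv (Equiv.ofBijective _ (DoubleCoset.sigmaCosetPair_bijective H K g hg))
      (DoubleCoset.sigmaCosetPair_smul H K g)).symm ≪≫
    Rep.ofMulActionSigmaIso R G _⟩
end

section
/- Let f : R → S be a surjective homomorphism of commutative rings, G a finite group, and X, Y finite G-sets. Then base change is full on permutation modules: for every morphism φ : S[X] → S[Y] in Rep S G there exists a morphism ψ : R[X] → R[Y] in Rep R G such that for every x ∈ X, φ(e_x) equals the image of ψ(e_x) under the coefficientwise map R[Y] → S[Y] induced by f (i.e., applying f to each coefficient). -/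
/-!
The coefficient of `φ(e_x)` at `y` is a `G`-invariant function of `(x, y)`. Composing it with any
set-theoretic section of `f` preserves invariance, and a section sending `0` to `0` also preserves
finite support, so the lifted coefficients are those of an equivariant map `R[X] ⟶ R[Y]`.
-/

open CategoryTheory

universe u

theorem Function.Surjective.exists_zeroHom_rightInverse {M N : Type*} [Zero M] [Zero N]
    {f : M → N} (hf : Function.Surjective f) (hf0 : f 0 = 0) :
    ∃ s : ZeroHom N M, Function.RightInverse s f := by
  classical
  refine ⟨⟨fun n => if n = 0 then 0 else Function.surjInv hf n, if_pos rfl⟩, fun n => ?_⟩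
  by_cases hn : n = 0
  · simp [hn, hf0]
  · simp [hn, Function.surjInv_eq hf]

namespace Representation

open MonoidAlgebra

theorem ofMulAction_ofCoeff_mapRange {k k' G H : Type*} [Semiring k] [Semiring k'] [Group G]
    [MulAction G H] (s : ZeroHom k k') (g : G) (v : k[H]) :
    ofCoeff ((ofMulAction k G H g v).coeff.mapRange s s.map_zero) =
      ofMulAction k' G H g (ofCoeff (v.coeff.mapRange s s.map_zero)) := by
  ext h
  simp [coeff_ofMulAction]

end Representation

namespace Rep

open MonoidAlgebra

variable {k G X Y : Type u} [CommRing k] [Group G] [MulAction G X] [MulAction G Y]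

theorem ofMulAction_hom_single_smul (φ : ofMulAction k G X ⟶ ofMulAction k G Y) (g : G) (x : X) :
    φ.hom (single (g • x) 1) = Representation.ofMulAction k G Y g (φ.hom (single x 1)) := by
  rw [← Representation.ofMulAction_single]
  exact hom_comm_apply φ g (single x 1)

theorem exists_ofMulAction_hom_single (ℓ : X → k[Y])
    (hℓ : ∀ (g : G) (x : X), ℓ (g • x) = Representation.ofMulAction k G Y g (ℓ x)) :
    ∃ ψ : ofMulAction k G X ⟶ ofMulAction k G Y, ∀ x, ψ.hom (single x 1) = ℓ x := by
  let b := MonoidAlgebra.basis X k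
  refine ⟨ofHom ⟨b.constr k ℓ, fun g => b.ext fun x => ?_⟩, fun x => ?_⟩
  · rw [LinearMap.comp_apply, LinearMap.comp_apply, basis_apply, Representation.ofMulAction_single,
      ← basis_apply, b.constr_basis, ← basis_apply, b.constr_basis, hℓ]
  · simpa [b] using b.constr_basis k ℓ x

end Rep

theorem baseChange_full_on_permutation_modules_general
    (R S : Type u) [CommRing R] [CommRing S] (f : R →+* S) (hf : Function.Surjective f)
    (G : Type u) [Group G]
    (X Y : Type u) [MulAction G X] [MulAction G Y]
    (φ : Rep.ofMulAction S G X ⟶ Rep.ofMulAction S G Y) :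
    ∃ ψ : Rep.ofMulAction R G X ⟶ Rep.ofMulAction R G Y,
      ∀ x : X, MonoidAlgebra.coeff (φ.hom (MonoidAlgebra.single x (1 : S))) =
        Finsupp.mapRange f f.map_zero (MonoidAlgebra.coeff (ψ.hom (MonoidAlgebra.single x (1 : R)))) := by
  obtain ⟨s, hs⟩ := hf.exists_zeroHom_rightInverse f.map_zero
  obtain ⟨ψ, hψ⟩ := Rep.exists_ofMulAction_hom_single
    (fun x => MonoidAlgebra.ofCoeff ((φ.hom (.single x 1)).coeff.mapRange s s.map_zero))
    fun g x => by
      rw [Rep.ofMulAction_hom_single_smul, Representation.ofMulAction_ofCoeff_mapRange]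
  refine ⟨ψ, fun x => ?_⟩
  ext y
  simp [hψ, hs _]

/-- Let `f : R → S` be a surjective homomorphism of commutative rings, `G` a finite group and
`X`, `Y` finite `G`-sets. Then base change is full on permutation modules: every morphism
`φ : S[X] ⟶ S[Y]` in `Rep S G` is the coefficientwise image of some morphism
`ψ : R[X] ⟶ R[Y]` in `Rep R G`. -/
theorem baseChange_full_on_permutation_modules
    (R S : Type u) [CommRing R] [CommRing S] (f : R →+* S) (hf : Function.Surjective f)
    (G : Type u) [Group G] [Finite G]
    (X Y : Type u) [Finite X] [Finite Y] [MulAction G X] [MulAction G Y]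
    (φ : Rep.ofMulAction S G X ⟶ Rep.ofMulAction S G Y) :
    ∃ ψ : Rep.ofMulAction R G X ⟶ Rep.ofMulAction R G Y,
      ∀ x : X, MonoidAlgebra.coeff (φ.hom (MonoidAlgebra.single x (1 : S))) =
        Finsupp.mapRange f f.map_zero (MonoidAlgebra.coeff (ψ.hom (MonoidAlgebra.single x (1 : R)))) :=
  baseChange_full_on_permutation_modules_general R S f hf G X Y φ
end
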